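/- Let T₀ ∈ ℝ and let H : [T₀,+∞) → ℝ be continuously differentiable with derivative H′ positive and monotonically nondecreasing on [T₀,+∞) (in particular H is strictly increasing and tends to +∞). Then for every real number α ≠ 0 and every T ≥ T₀ one has |∫_{T₀}^{T} e^{iαH(t)} dt| ≤ 4 / (|α| · H′(T₀)). -/

import Mathlib

open MeasureTheory Filter Set

noncomputable section

/-- uniform oscillatory-integral bound. If `H` is continuously
differentiable on `[T₀,∞)` with derivative `H'` positive and nondecreasing there, then
for every `α ≠ 0` and `T ≥ T₀`, `|∫_{T₀}^T e^{iαH(t)} dt| ≤ 4/(|α|·H'(T₀))`. -/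
theorem oscillatory_integral_bound
    (T₀ : ℝ) (H H' : ℝ → ℝ)
    (hderiv : ∀ t ∈ Set.Ici T₀, HasDerivWithinAt H (H' t) (Set.Ici T₀) t)
    (hcont : ContinuousOn H' (Set.Ici T₀))
    (hpos : ∀ t ∈ Set.Ici T₀, 0 < H' t)
    (hmono : MonotoneOn H' (Set.Ici T₀)) :
    ∀ α : ℝ, α ≠ 0 → ∀ T ≥ T₀,
      ‖∫ t in T₀..T, Complex.exp (((α * H t : ℝ) : ℂ) * Complex.I)‖
        ≤ 4 / (|α| * H' T₀) := by
  intro α hα T hT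
  have hHc : ContinuousOn H (Set.Ici T₀) := fun t ht => (hderiv t ht).continuousWithinAt
  set m : ℝ → ℝ := fun t => max t T₀ with hm
  have hmc : Continuous m := continuous_id.max continuous_const
  have hmmem : ∀ t, m t ∈ Set.Ici T₀ := fun t => Set.mem_Ici.2 (le_max_right _ _)
  have hmeq : ∀ t ∈ Set.Ici T₀, m t = t := fun t ht => max_eq_left ht
  set G : ℝ → ℝ := fun t => (H' (m t))⁻¹ with hGdef
  set Ψ : ℝ → ℂ := fun t => Complex.exp (((α * H (m t) : ℝ) : ℂ) * Complex.I) * (H' (m t) : ℂ)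
    with hΨdef
  set F : ℝ → ℂ := fun t => Complex.exp (((α * H (m t) : ℝ) : ℂ) * Complex.I) / ((α : ℂ) * Complex.I)
    with hFdef
  have hH'm : Continuous fun t => H' (m t) := hcont.comp_continuous hmc hmmem
  have hHm : Continuous fun t => H (m t) := hHc.comp_continuous hmc hmmem
  have hGc : Continuous G := hH'm.inv₀ fun t => (hpos _ (hmmem t)).ne'
  have hGpos : ∀ t, 0 < G t := fun t => inv_pos.2 (hpos _ (hmmem t))
  have hGanti : Antitone G := fun u v huv =>
    inv_anti₀ (hpos _ (hmmem u)) (hmono (hmmem u) (hmmem v) (max_le_max huv le_rfl))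
  have hexpc : Continuous fun t => Complex.exp (((α * H (m t) : ℝ) : ℂ) * Complex.I) :=
    Complex.continuous_exp.comp
      ((Complex.continuous_ofReal.comp (continuous_const.mul hHm)).mul continuous_const)
  have hΨc : Continuous Ψ := hexpc.mul (Complex.continuous_ofReal.comp hH'm)
  have hFc : Continuous F := hexpc.div_const _
  have hαC : (α : ℂ) * Complex.I ≠ 0 :=
    mul_ne_zero (Complex.ofReal_ne_zero.2 hα) Complex.I_ne_zero
  have hFnorm : ∀ t, ‖F t‖ = |α|⁻¹ := by
    intro t
    have h0 : ‖F t‖ = ‖Complex.exp (((α * H (m t) : ℝ) : ℂ) * Complex.I)‖ / ‖(α : ℂ) * Complex.I‖ := by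
      rw [hFdef]
      exact norm_div _ _
    rw [h0, Complex.norm_exp_ofReal_mul_I, norm_mul, Complex.norm_I, Complex.norm_real,
      Real.norm_eq_abs, mul_one, one_div]
  have hFderiv : ∀ t ∈ Set.Ici T₀, HasDerivWithinAt F (Ψ t) (Set.Ici T₀) t := by
    intro t ht
    have h1 : HasDerivWithinAt (fun u => ((α * H u : ℝ) : ℂ)) ((α * H' t : ℝ) : ℂ)
        (Set.Ici T₀) t :=
      Complex.ofRealCLM.hasFDerivAt.comp_hasDerivWithinAt t ((hderiv t ht).const_mul α)
    have h2 : HasDerivWithinAt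
        (fun u => Complex.exp (((α * H u : ℝ) : ℂ) * Complex.I) / ((α : ℂ) * Complex.I))
        (Complex.exp (((α * H t : ℝ) : ℂ) * Complex.I) * (((α * H' t : ℝ) : ℂ) * Complex.I)
          / ((α : ℂ) * Complex.I)) (Set.Ici T₀) t :=
      ((h1.mul_const Complex.I).cexp).div_const _
    have heq : ∀ u ∈ Set.Ici T₀,
        F u = Complex.exp (((α * H u : ℝ) : ℂ) * Complex.I) / ((α : ℂ) * Complex.I) := by
      intro u hu
      simp only [hFdef]
      rw [hmeq u hu]
    have h3 := h2.congr heq (heq t ht)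
    convert h3 using 1
    · rfl
    simp only [hΨdef]
    rw [hmeq t ht, eq_div_iff hαC]
    push_cast
    ring
  set A : Set (ℝ × ℝ) := (Set.Ioc T₀ T ×ˢ Set.Ioo 0 (G T₀)) ∩ {p | p.2 < G p.1} with hAdef
  have hAm : MeasurableSet A :=
    (measurableSet_Ioc.prod measurableSet_Ioo).inter
      (measurableSet_lt measurable_snd (hGc.measurable.comp measurable_fst))
  set f : ℝ → ℝ → ℂ := fun t s => A.indicator (fun p => Ψ p.1) (t, s) with hfdef
  have hfu : Function.uncurry f = A.indicator fun p => Ψ p.1 := by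
    funext p
    cases p
    rfl
  have hInt : Integrable (Function.uncurry f) (volume.prod volume) := by
    rw [hfu, integrable_indicator_iff hAm]
    refine Measure.integrableOn_of_bounded (M := H' T) ?_ ?_ ?_
    · refine ne_of_lt (lt_of_le_of_lt (measure_mono Set.inter_subset_left) ?_)
      rw [Measure.prod_prod]
      exact ENNReal.mul_lt_top measure_Ioc_lt_top measure_Ioo_lt_top
    · exact (hΨc.comp continuous_fst).aestronglyMeasurable
    · filter_upwards [ae_restrict_mem hAm] with p hp
      have hp1 : p.1 ∈ Set.Ioc T₀ T := hp.1.1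
      have hnorm : ‖Ψ p.1‖ = H' (m p.1) := by
        simp only [hΨdef]
        rw [norm_mul, Complex.norm_exp_ofReal_mul_I, one_mul, Complex.norm_real,
          Real.norm_eq_abs, abs_of_pos (hpos _ (hmmem p.1))]
      rw [hnorm, hmeq p.1 hp1.1.le]
      exact hmono hp1.1.le hT hp1.2
  have hsection1 : ∀ t, (∫ s, f t s) = (Set.Ioc T₀ T).indicator (fun u => (G u : ℂ) * Ψ u) t := by
    intro t
    by_cases ht : t ∈ Set.Ioc T₀ T
    · have hsec : (fun s => f t s) = (Set.Ioo (0 : ℝ) (G t)).indicator fun _ => Ψ t := by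
        funext s
        by_cases hs : s ∈ Set.Ioo (0 : ℝ) (G t)
        · have hmemA : (t, s) ∈ A := ⟨⟨ht, ⟨hs.1, lt_of_lt_of_le hs.2 (hGanti ht.1.le)⟩⟩, hs.2⟩
          simp only [hfdef]
          rw [Set.indicator_of_mem hmemA, Set.indicator_of_mem hs]
        · have hmemA : (t, s) ∉ A := fun hmem => hs ⟨hmem.1.2.1, hmem.2⟩
          simp only [hfdef]
          rw [Set.indicator_of_notMem hmemA, Set.indicator_of_notMem hs]
      rw [Set.indicator_of_mem ht]
      calc (∫ s, f t s) = ∫ s, (Set.Ioo (0 : ℝ) (G t)).indicator (fun _ => Ψ t) s := by rw [hsec]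
        _ = (volume (Set.Ioo (0 : ℝ) (G t))).toReal • Ψ t :=
            integral_indicator_const _ measurableSet_Ioo
        _ = (G t : ℂ) * Ψ t := by
            rw [Real.volume_Ioo, sub_zero, ENNReal.toReal_ofReal (hGpos t).le,
              Complex.real_smul]
    · have hz : ∀ s, f t s = 0 := fun s =>
        Set.indicator_of_notMem (fun hmem => ht hmem.1.1) _
      rw [Set.indicator_of_notMem ht]
      simp [hz]
  have hLHS : (∫ t, ∫ s, f t s)
      = ∫ t in Set.Ioc T₀ T, Complex.exp (((α * H t : ℝ) : ℂ) * Complex.I) := by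
    rw [show (fun t => ∫ s, f t s) = (Set.Ioc T₀ T).indicator (fun u => (G u : ℂ) * Ψ u) from
      funext hsection1]
    rw [integral_indicator measurableSet_Ioc]
    refine setIntegral_congr_fun measurableSet_Ioc fun t ht => ?_
    have hmt : m t = t := hmeq t ht.1.le
    have hne : (H' t : ℂ) ≠ 0 := Complex.ofReal_ne_zero.2 (hpos t ht.1.le).ne'
    simp only [hΨdef, hGdef, hmt]
    rw [Complex.ofReal_inv]
    field_simp
  have hinner : ∀ s ∈ Set.Ioo (0 : ℝ) (G T₀), ‖∫ t, f t s‖ ≤ 2 * |α|⁻¹ := by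
    intro s hs
    set S : Set ℝ := Set.Ioc T₀ T ∩ {t | s < G t} with hSdef
    have hSm : MeasurableSet S :=
      measurableSet_Ioc.inter (measurableSet_lt measurable_const hGc.measurable)
    have hsec : (fun t => f t s) = S.indicator Ψ := by
      funext t
      by_cases ht : t ∈ S
      · have hmemA : (t, s) ∈ A := ⟨⟨ht.1, hs⟩, ht.2⟩
        simp only [hfdef]
        rw [Set.indicator_of_mem hmemA, Set.indicator_of_mem ht]
      · have hmemA : (t, s) ∉ A := fun hmem => ht ⟨hmem.1.1, hmem.2⟩
        simp only [hfdef]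
        rw [Set.indicator_of_notMem hmemA, Set.indicator_of_notMem ht]
    set c : ℝ := sSup (insert T₀ S) with hcdef
    have hbdd : BddAbove (insert T₀ S) := by
      refine ⟨T, ?_⟩
      rintro x (rfl | hx)
      · exact hT
      · exact hx.1.2
    have hc1 : T₀ ≤ c := le_csSup hbdd (Set.mem_insert _ _)
    have hsub1 : Set.Ioo T₀ c ⊆ S := by
      intro t ht
      obtain ⟨x, hx, htx⟩ := exists_lt_of_lt_csSup (Set.insert_nonempty _ _) ht.2
      rcases hx with rfl | hx
      · exact absurd htx (not_lt.2 ht.1.le)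
      · exact ⟨⟨ht.1, le_trans htx.le hx.1.2⟩, lt_of_lt_of_le hx.2 (hGanti htx.le)⟩
    have hsub2 : S ⊆ Set.Ioc T₀ c := fun t ht =>
      ⟨ht.1.1, le_csSup hbdd (Set.mem_insert_of_mem _ ht)⟩
    have hae : S =ᵐ[volume] Set.Ioc T₀ c := by
      rw [ae_eq_set]
      constructor
      · rw [Set.diff_eq_empty.2 hsub2]
        simp
      · refine measure_mono_null (fun t ht' => ?_) (measure_singleton c)
        obtain ⟨ht, htS⟩ := ht'
        have hnlt : ¬ t < c := fun hlt => htS (hsub1 ⟨ht.1, hlt⟩)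
        exact Set.mem_singleton_iff.2 (le_antisymm ht.2 (not_lt.1 hnlt))
    have hFTC : (∫ t in Set.Ioc T₀ c, Ψ t) = F c - F T₀ := by
      rw [← intervalIntegral.integral_of_le hc1]
      refine intervalIntegral.integral_eq_sub_of_hasDeriv_right_of_le hc1 hFc.continuousOn
        (fun x hx => (hFderiv x hx.1.le).mono fun y hy => le_of_lt (lt_of_le_of_lt hx.1.le hy))
        (hΨc.intervalIntegrable _ _)
    calc ‖∫ t, f t s‖ = ‖∫ t in S, Ψ t‖ := by rw [hsec, integral_indicator hSm]
      _ = ‖∫ t in Set.Ioc T₀ c, Ψ t‖ := by rw [setIntegral_congr_set hae]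
      _ = ‖F c - F T₀‖ := by rw [hFTC]
      _ ≤ ‖F c‖ + ‖F T₀‖ := norm_sub_le _ _
      _ = 2 * |α|⁻¹ := by rw [hFnorm, hFnorm]; ring
  have hRHS : ‖∫ s, ∫ t, f t s‖ ≤ G T₀ * (2 * |α|⁻¹) := by
    have hg : Integrable ((Set.Ioo (0 : ℝ) (G T₀)).indicator fun _ => 2 * |α|⁻¹) volume := by
      rw [integrable_indicator_iff measurableSet_Ioo]
      exact integrableOn_const measure_Ioo_lt_top.ne
    have hle : ∀ s, ‖∫ t, f t s‖ ≤ (Set.Ioo (0 : ℝ) (G T₀)).indicator (fun _ => 2 * |α|⁻¹) s := by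
      intro s
      by_cases hs : s ∈ Set.Ioo (0 : ℝ) (G T₀)
      · rw [Set.indicator_of_mem hs]
        exact hinner s hs
      · rw [Set.indicator_of_notMem hs]
        have hz : ∀ t, f t s = 0 := fun t =>
          Set.indicator_of_notMem (fun hmem => hs hmem.1.2) _
        simp [hz]
    calc ‖∫ s, ∫ t, f t s‖
        ≤ ∫ s, (Set.Ioo (0 : ℝ) (G T₀)).indicator (fun _ => 2 * |α|⁻¹) s :=
          norm_integral_le_of_norm_le hg (Eventually.of_forall hle)
      _ = (volume (Set.Ioo (0 : ℝ) (G T₀))).toReal • (2 * |α|⁻¹) :=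
          integral_indicator_const _ measurableSet_Ioo
      _ = G T₀ * (2 * |α|⁻¹) := by
          rw [Real.volume_Ioo, sub_zero, ENNReal.toReal_ofReal (hGpos T₀).le, smul_eq_mul]
  have hfinal : G T₀ * (2 * |α|⁻¹) ≤ 4 / (|α| * H' T₀) := by
    have hα0 : 0 < |α| := abs_pos.2 hα
    have hH0 : 0 < H' T₀ := hpos T₀ Set.self_mem_Ici
    have hGT : G T₀ = (H' T₀)⁻¹ := by
      simp only [hGdef]
      rw [hmeq T₀ Set.self_mem_Ici]
    rw [hGT, div_eq_mul_inv, mul_inv]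
    nlinarith [inv_pos.2 hα0, inv_pos.2 hH0, mul_pos (inv_pos.2 hα0) (inv_pos.2 hH0)]
  calc ‖∫ t in T₀..T, Complex.exp (((α * H t : ℝ) : ℂ) * Complex.I)‖
      = ‖∫ s, ∫ t, f t s‖ := by
        rw [intervalIntegral.integral_of_le hT, ← hLHS, integral_integral_swap hInt]
    _ ≤ G T₀ * (2 * |α|⁻¹) := hRHS
    _ ≤ 4 / (|α| * H' T₀) := hfinal
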